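/- arXiv:2412.05689 — 2 statements merged into one kernel-verified Lean document; each statement's English description precedes it below -/
import Mathlib

section
/- (Safety step size) Let ε ∈ (0, 3/4), λ > 0, and let f : ℝ^{d×r} → ℝ be differentiable. Suppose x_k ∈ St(d,r)^ε and ‖grad f(x_k)‖_F ≤ G for some G > 0. If the step size satisfies 0 < α ≤ α_safe := min{ λε(1−ε)/(G² + λ²(1+ε)ε²), √(ε/(2G²)), 1/(2λ) }, then the landing iterate x_{k+1} = x_k − α(grad f(x_k) + λ x_k(x_kᵀx_k − I_r)) remains in the safety region: x_{k+1} ∈ St(d,r)^ε. -/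
open Matrix

attribute [local instance] Matrix.frobeniusNormedAddCommGroup Matrix.frobeniusNormedSpace

/-- Frobenius inner product `⟨A, B⟩ = Tr(A Bᵀ)`. -/
noncomputable def finner {m n : Type*} [Fintype m] [Fintype n]
    (A B : Matrix m n ℝ) : ℝ := (A * Bᵀ).trace

/-- Skew part of a square matrix: `skew(A) = (A - Aᵀ)/2`. -/
noncomputable def mskew {m : Type*} (A : Matrix m m ℝ) : Matrix m m ℝ :=
  ((1 : ℝ) / 2) • (A - Aᵀ)

lemma frob_norm_sq {m n : Type*} [Fintype m] [Fintype n] (A : Matrix m n ℝ) :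
    ‖A‖ ^ 2 = ∑ i, ∑ j, (A i j) ^ 2 := by
  rw [Matrix.frobenius_norm_def]
  rw [← Real.rpow_natCast _ 2, ← Real.rpow_mul (by positivity)]
  norm_num

lemma frob_trace_sq {m n : Type*} [Fintype m] [Fintype n] (A : Matrix m n ℝ) :
    (Aᵀ * A).trace = ‖A‖ ^ 2 := by
  rw [frob_norm_sq]
  simp [Matrix.trace, Matrix.diag, Matrix.mul_apply, sq]
  rw [Finset.sum_comm]

lemma frob_cs {m n : Type*} [Fintype m] [Fintype n] (A B : Matrix m n ℝ) :
    (A * Bᵀ).trace ≤ ‖A‖ * ‖B‖ := by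
  have h1 : (A * Bᵀ).trace = ∑ p : m × n, A p.1 p.2 * B p.1 p.2 := by
    rw [Fintype.sum_prod_type]
    simp [Matrix.trace, Matrix.diag, Matrix.mul_apply]
  have h2 : (∑ p : m × n, A p.1 p.2 * B p.1 p.2) ^ 2 ≤
      (∑ p : m × n, (A p.1 p.2) ^ 2) * (∑ p : m × n, (B p.1 p.2) ^ 2) :=
    Finset.sum_mul_sq_le_sq_mul_sq _ _ _
  have hA : ∑ p : m × n, (A p.1 p.2) ^ 2 = ‖A‖ ^ 2 := by
    rw [frob_norm_sq, Fintype.sum_prod_type]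
  have hB : ∑ p : m × n, (B p.1 p.2) ^ 2 = ‖B‖ ^ 2 := by
    rw [frob_norm_sq, Fintype.sum_prod_type]
  rw [h1]
  nlinarith [norm_nonneg A, norm_nonneg B, mul_nonneg (norm_nonneg A) (norm_nonneg B), h2,
    hA, hB]

set_option maxHeartbeats 1000000 in
/-- (Safety step size) If `x_k ∈ St(d,r)^ε`, `‖grad f(x_k)‖_F ≤ G`, and
`0 < α ≤ α_safe = min{λε(1-ε)/(G² + λ²(1+ε)ε²), √(ε/(2G²)), 1/(2λ)}`, then the landing update
`x_{k+1} = x_k - α (grad f(x_k) + λ x_k(x_kᵀ x_k - I_r))` satisfies `x_{k+1} ∈ St(d,r)^ε`. -/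
theorem safety_step_size (d r : ℕ) (ε lam G α : ℝ)
    (hε : 0 < ε ∧ ε < 3 / 4) (hlam : 0 < lam) (hG : 0 < G)
    (f : Matrix (Fin d) (Fin r) ℝ → ℝ)
    (gradf : Matrix (Fin d) (Fin r) ℝ → Matrix (Fin d) (Fin r) ℝ)
    (hf : Differentiable ℝ f)
    (hgrad : ∀ x v : Matrix (Fin d) (Fin r) ℝ, fderiv ℝ f x v = finner (gradf x) v)
    (xk : Matrix (Fin d) (Fin r) ℝ)
    (hxk : ‖xkᵀ * xk - 1‖ ≤ ε)
    (hGbound : ‖mskew (gradf xk * xkᵀ) * xk‖ ≤ G)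
    (hα : 0 < α)
    (hαsafe : α ≤ min (min (lam * ε * (1 - ε) / (G ^ 2 + lam ^ 2 * (1 + ε) * ε ^ 2))
      (Real.sqrt (ε / (2 * G ^ 2)))) (1 / (2 * lam))) :
    ‖(xk - α • (mskew (gradf xk * xkᵀ) * xk + lam • (xk * (xkᵀ * xk - 1))))ᵀ *
        (xk - α • (mskew (gradf xk * xkᵀ) * xk + lam • (xk * (xkᵀ * xk - 1)))) - 1‖ ≤ ε := by
  obtain ⟨hε0, hε34⟩ := hε
  set A := mskew (gradf xk * xkᵀ) with hA
  set N := xkᵀ * xk - 1 with hN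
  set W := A * xk + lam • (xk * N) with hW
  -- basic facts
  have hAskew : Aᵀ = -A := by
    rw [hA]; unfold mskew
    rw [Matrix.transpose_smul, Matrix.transpose_sub, Matrix.transpose_transpose]
    module
  have hNsym : Nᵀ = N := by
    rw [hN, Matrix.transpose_sub, Matrix.transpose_mul, Matrix.transpose_transpose,
      Matrix.transpose_one]
  have hxx : xkᵀ * xk = N + 1 := by rw [hN]; abel
  -- cross terms
  have h1 : xkᵀ * W = xkᵀ * A * xk + lam • (N * N + N) := by
    rw [hW, Matrix.mul_add, Matrix.mul_smul]
    congr 1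
    · rw [Matrix.mul_assoc]
    · rw [← Matrix.mul_assoc, hxx, Matrix.add_mul, Matrix.one_mul]
  have h2 : Wᵀ * xk = -(xkᵀ * A * xk) + lam • (N * N + N) := by
    rw [hW, Matrix.transpose_add, Matrix.transpose_smul, Matrix.transpose_mul,
      Matrix.transpose_mul, hNsym, hAskew, Matrix.add_mul, Matrix.smul_mul]
    congr 1
    · rw [Matrix.mul_neg, Matrix.neg_mul]
    · rw [Matrix.mul_assoc, hxx, Matrix.mul_add, Matrix.mul_one]
  -- key algebraic identity
  have key : (xk - α • W)ᵀ * (xk - α • W) - 1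
      = (1 - 2 * α * lam) • N - (2 * α * lam) • (N * N) + (α ^ 2) • (Wᵀ * W) := by
    rw [Matrix.transpose_sub, Matrix.transpose_smul, Matrix.sub_mul, Matrix.mul_sub,
      Matrix.mul_sub, Matrix.smul_mul, Matrix.smul_mul, Matrix.mul_smul, Matrix.mul_smul,
      hxx, h1, h2]
    match_scalars <;> ring
  rw [key]
  -- norm bounds
  have hNnorm : ‖N‖ ≤ ε := hxk
  have hNN : ‖N * N‖ ≤ ε ^ 2 := by
    calc ‖N * N‖ ≤ ‖N‖ * ‖N‖ := Matrix.frobenius_norm_mul N N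
    _ ≤ ε * ε := by nlinarith [norm_nonneg N]
    _ = ε ^ 2 := by ring
  -- bound on ‖xk * N‖ ^ 2
  have hCsq : ‖xk * N‖ ^ 2 ≤ (1 + ε) * ε ^ 2 := by
    have ht : ((xk * N)ᵀ * (xk * N)).trace = (N * N * Nᵀ).trace + (Nᵀ * N).trace := by
      rw [Matrix.transpose_mul, Matrix.mul_assoc, ← Matrix.mul_assoc xkᵀ, hxx, hNsym,
        Matrix.add_mul, Matrix.one_mul, Matrix.mul_add, Matrix.trace_add, ← Matrix.mul_assoc]
    have h3 : (N * N * Nᵀ).trace ≤ ‖N‖ * ‖N‖ * ‖N‖ := by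
      calc (N * N * Nᵀ).trace ≤ ‖N * N‖ * ‖N‖ := frob_cs (N * N) N
      _ ≤ ‖N‖ * ‖N‖ * ‖N‖ := by
          have := Matrix.frobenius_norm_mul N N
          nlinarith [norm_nonneg N, norm_nonneg (N * N)]
    have h4 : (Nᵀ * N).trace = ‖N‖ ^ 2 := frob_trace_sq N
    have h5 := frob_trace_sq (xk * N)
    have hN3 : ‖N‖ ^ 3 ≤ ε ^ 3 := pow_le_pow_left₀ (norm_nonneg N) hNnorm 3
    have hN2 : ‖N‖ ^ 2 ≤ ε ^ 2 := by nlinarith [norm_nonneg N]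
    nlinarith [h3, h4, h5, ht, hN3, hN2]
  -- bound on ‖W‖²
  have hWsq : ‖W‖ ^ 2 ≤ 2 * (G ^ 2 + lam ^ 2 * (1 + ε) * ε ^ 2) := by
    have h6 : ‖W‖ ≤ G + lam * ‖xk * N‖ := by
      calc ‖W‖ ≤ ‖A * xk‖ + ‖lam • (xk * N)‖ := norm_add_le _ _
      _ ≤ G + lam * ‖xk * N‖ := by
          rw [norm_smul, Real.norm_eq_abs, abs_of_pos hlam]
          linarith [hGbound]
    have hC0 : (0:ℝ) ≤ ‖xk * N‖ := norm_nonneg _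
    nlinarith [norm_nonneg W, sq_nonneg (G - lam * ‖xk * N‖), sq_nonneg ‖xk * N‖]
  have hWW : ‖Wᵀ * W‖ ≤ 2 * (G ^ 2 + lam ^ 2 * (1 + ε) * ε ^ 2) := by
    calc ‖Wᵀ * W‖ ≤ ‖Wᵀ‖ * ‖W‖ := Matrix.frobenius_norm_mul Wᵀ W
    _ = ‖W‖ ^ 2 := by rw [Matrix.frobenius_norm_transpose]; ring
    _ ≤ _ := hWsq
  -- step-size facts
  have hαlam : 2 * α * lam ≤ 1 := by
    have := (hαsafe.trans (min_le_right _ _)).trans_eq rfl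
    have h7 : α ≤ 1 / (2 * lam) := hαsafe.trans (min_le_right _ _)
    rw [le_div_iff₀ (by positivity)] at h7
    nlinarith
  have hS : (0:ℝ) < G ^ 2 + lam ^ 2 * (1 + ε) * ε ^ 2 := by positivity
  have hα1 : α * (G ^ 2 + lam ^ 2 * (1 + ε) * ε ^ 2) ≤ lam * ε * (1 - ε) := by
    have h8 : α ≤ lam * ε * (1 - ε) / (G ^ 2 + lam ^ 2 * (1 + ε) * ε ^ 2) :=
      hαsafe.trans ((min_le_left _ _).trans (min_le_left _ _))
    rw [le_div_iff₀ hS] at h8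
    exact h8
  -- final chain
  calc ‖(1 - 2 * α * lam) • N - (2 * α * lam) • (N * N) + (α ^ 2) • (Wᵀ * W)‖
      ≤ ‖(1 - 2 * α * lam) • N‖ + ‖(2 * α * lam) • (N * N)‖ + ‖(α ^ 2) • (Wᵀ * W)‖ := by
        refine (norm_add_le _ _).trans ?_
        have := norm_sub_le ((1 - 2 * α * lam) • N) ((2 * α * lam) • (N * N))
        linarith
    _ ≤ (1 - 2 * α * lam) * ε + (2 * α * lam) * ε ^ 2
        + α ^ 2 * (2 * (G ^ 2 + lam ^ 2 * (1 + ε) * ε ^ 2)) := by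
        rw [norm_smul, norm_smul, norm_smul]
        simp only [Real.norm_eq_abs]
        rw [abs_of_nonneg (by linarith), abs_of_nonneg (by positivity),
          abs_of_nonneg (by positivity)]
        have e1 : (1 - 2 * α * lam) * ‖N‖ ≤ (1 - 2 * α * lam) * ε :=
          mul_le_mul_of_nonneg_left hNnorm (by linarith)
        have e2 : (2 * α * lam) * ‖N * N‖ ≤ (2 * α * lam) * ε ^ 2 :=
          mul_le_mul_of_nonneg_left hNN (by positivity)
        have e3 : α ^ 2 * ‖Wᵀ * W‖ ≤ α ^ 2 * (2 * (G ^ 2 + lam ^ 2 * (1 + ε) * ε ^ 2)) :=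
          mul_le_mul_of_nonneg_left hWW (sq_nonneg α)
        linarith
    _ ≤ ε := by
        have h9 : α ^ 2 * (2 * (G ^ 2 + lam ^ 2 * (1 + ε) * ε ^ 2))
            ≤ 2 * α * (lam * ε * (1 - ε)) := by nlinarith [hα1, hα]
        nlinarith [h9]
end

section
/- (One-step linear descent of the merit function) Let 𝓛 : ℝ^{d×r} → ℝ be differentiable with L'-Lipschitz Euclidean gradient, let Λ : ℝ^{d×r} → ℝ^{d×r} be any map, and let ρ > 0, μ' > 0, and 0 < α ≤ ρ/L'. Suppose that at a point x ∈ ℝ^{d×r}: (i) ⟨∇𝓛(x), Λ(x)⟩ ≥ ρ‖Λ(x)‖²_F, and (ii) 𝓛(x) ≤ (1/μ')‖Λ(x)‖²_F. Then the update x⁺ = x − αΛ(x) satisfies 𝓛(x⁺) ≤ (1 − αρμ'/2)·𝓛(x). -/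
open Matrix

attribute [local instance] Matrix.frobeniusNormedAddCommGroup Matrix.frobeniusNormedSpace

/-!
A Lipschitz gradient gives the quadratic upper bound
`𝓛 y ≤ 𝓛 x + ⟨∇𝓛(x), y - x⟩ + L'/2 ‖y - x‖²`. For `y = x - αΛ(x)` condition (i) and
`αL' ≤ ρ` make the decrease at least `(αρ/2)‖Λ(x)‖²`, and condition (ii) bounds this from
below by `(αρμ'/2) 𝓛(x)`.
-/

theorem le_add_fderiv_add_of_norm_fderiv_sub_le {E : Type*} [NormedAddCommGroup E]
    [NormedSpace ℝ E] {f : E → ℝ} {L : ℝ} (hf : Differentiable ℝ f)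
    (hf' : ∀ y z, ‖fderiv ℝ f y - fderiv ℝ f z‖ ≤ L * ‖y - z‖) (x y : E) :
    f y ≤ f x + fderiv ℝ f x (y - x) + L / 2 * ‖y - x‖ ^ 2 := by
  set v := y - x
  let φ : ℝ → ℝ := fun t ↦ f (x + t • v) - t * fderiv ℝ f x v - L / 2 * t ^ 2 * ‖v‖ ^ 2
  have hφ : ∀ t, HasDerivAt φ
      (fderiv ℝ f (x + t • v) v - fderiv ℝ f x v - L * t * ‖v‖ ^ 2) t := by
    intro t
    have hline : HasDerivAt (fun t : ℝ ↦ x + t • v) v t := by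
      simpa using ((hasDerivAt_id t).smul_const v).const_add x
    have hquad := ((hasDerivAt_pow 2 t).const_mul (L / 2)).mul_const (‖v‖ ^ 2)
    exact ((((hf _).hasFDerivAt.comp_hasDerivAt t hline).sub
      ((hasDerivAt_id t).mul_const (fderiv ℝ f x v))).sub hquad).congr_deriv (by ring)
  have hφ_deriv_nonpos : ∀ t ∈ interior (Set.Icc (0 : ℝ) 1),
      fderiv ℝ f (x + t • v) v - fderiv ℝ f x v - L * t * ‖v‖ ^ 2 ≤ 0 := by
    rw [interior_Icc]
    rintro t ⟨ht, -⟩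
    have := calc fderiv ℝ f (x + t • v) v - fderiv ℝ f x v
        = (fderiv ℝ f (x + t • v) - fderiv ℝ f x) v := rfl
      _ ≤ ‖fderiv ℝ f (x + t • v) - fderiv ℝ f x‖ * ‖v‖ :=
        (Real.le_norm_self _).trans (ContinuousLinearMap.le_opNorm _ _)
      _ ≤ L * ‖x + t • v - x‖ * ‖v‖ := by gcongr; exact hf' _ _
      _ = L * t * ‖v‖ ^ 2 := by
        rw [add_sub_cancel_left, norm_smul, Real.norm_of_nonneg ht.le]; ring
    linarith
  have hφ_anti : AntitoneOn φ (Set.Icc 0 1) :=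
    antitoneOn_of_hasDerivWithinAt_nonpos (convex_Icc 0 1)
      (fun t _ ↦ (hφ t).continuousAt.continuousWithinAt)
      (fun t _ ↦ (hφ t).hasDerivWithinAt) hφ_deriv_nonpos
  have h01 : φ 1 ≤ φ 0 := hφ_anti (by simp) (by simp) zero_le_one
  simp only [φ, v, one_smul, add_sub_cancel, zero_smul, add_zero] at h01
  linarith

section Frobenius

variable {m n : Type*} [Fintype m] [Fintype n]

lemma finner_eq_inner (A B : Matrix m n ℝ) :
    finner A B = inner ℝ (WithLp.toLp 2 fun p : m × n ↦ A p.1 p.2)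
      (WithLp.toLp 2 fun p : m × n ↦ B p.1 p.2) := by
  simp [finner, Matrix.trace, Matrix.mul_apply, Fintype.sum_prod_type, PiLp.inner_apply, mul_comm]

lemma frobenius_norm_eq_norm_toLp (A : Matrix m n ℝ) :
    ‖A‖ = ‖WithLp.toLp 2 fun p : m × n ↦ A p.1 p.2‖ := by
  simp [frobenius_norm_def, EuclideanSpace.norm_eq, Real.sqrt_eq_rpow, Fintype.sum_prod_type]

lemma abs_finner_le_norm_mul_norm (A B : Matrix m n ℝ) : |finner A B| ≤ ‖A‖ * ‖B‖ := by
  rw [finner_eq_inner, frobenius_norm_eq_norm_toLp A, frobenius_norm_eq_norm_toLp B]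
  exact abs_real_inner_le_norm _ _

lemma finner_sub_left (A B C : Matrix m n ℝ) : finner (A - B) C = finner A C - finner B C := by
  simp [finner, Matrix.sub_mul]

lemma finner_smul_right (c : ℝ) (A B : Matrix m n ℝ) : finner A (c • B) = c * finner A B := by
  simp [finner]

lemma le_add_finner_add_of_lipschitz_gradient {f : Matrix m n ℝ → ℝ}
    {g : Matrix m n ℝ → Matrix m n ℝ} {L : ℝ} (hL : 0 ≤ L) (hf : Differentiable ℝ f)
    (hg : ∀ y v, fderiv ℝ f y v = finner (g y) v) (hg' : ∀ y z, ‖g y - g z‖ ≤ L * ‖y - z‖)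
    (x y : Matrix m n ℝ) :
    f y ≤ f x + finner (g x) (y - x) + L / 2 * ‖y - x‖ ^ 2 := by
  rw [← hg]
  refine le_add_fderiv_add_of_norm_fderiv_sub_le hf (fun y z ↦ ?_) x y
  refine ContinuousLinearMap.opNorm_le_bound _ (by positivity) fun v ↦ ?_
  have hv : fderiv ℝ f y v - fderiv ℝ f z v = finner (g y - g z) v := by
    rw [hg, hg, finner_sub_left]
  -- `erw`: `fderiv ℝ f` was elaborated with the product topology of `Matrix`, the goal with
  -- the (defeq, not syntactically equal) topology of the Frobenius norm.
  erw [_root_.sub_apply, hv, Real.norm_eq_abs]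
  exact (abs_finner_le_norm_mul_norm _ _).trans (by gcongr; exact hg' y z)

end Frobenius

/-- (One-step linear descent of the merit function) If `𝓛` is differentiable with
`L'`-Lipschitz Euclidean gradient, `0 < α ≤ ρ/L'`, and at the point `x` one has
`⟨∇𝓛(x), Λ(x)⟩ ≥ ρ‖Λ(x)‖²` and `𝓛(x) ≤ (1/μ')‖Λ(x)‖²`, then the update `x⁺ = x - αΛ(x)`
satisfies `𝓛(x⁺) ≤ (1 - αρμ'/2) 𝓛(x)`. -/
theorem one_step_linear_descent (d r : ℕ) (L' ρ μ' α : ℝ)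
    (hρ : 0 < ρ) (hμ' : 0 < μ') (hα : 0 < α) (hαle : α ≤ ρ / L')
    (𝓛 : Matrix (Fin d) (Fin r) ℝ → ℝ)
    (h𝓛diff : Differentiable ℝ 𝓛)
    (gradL : Matrix (Fin d) (Fin r) ℝ → Matrix (Fin d) (Fin r) ℝ)
    (hgradL : ∀ y v : Matrix (Fin d) (Fin r) ℝ, fderiv ℝ 𝓛 y v = finner (gradL y) v)
    (hLip : ∀ y z : Matrix (Fin d) (Fin r) ℝ, ‖gradL y - gradL z‖ ≤ L' * ‖y - z‖)
    (Λ : Matrix (Fin d) (Fin r) ℝ → Matrix (Fin d) (Fin r) ℝ)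
    (x : Matrix (Fin d) (Fin r) ℝ)
    (h1 : finner (gradL x) (Λ x) ≥ ρ * ‖Λ x‖ ^ 2)
    (h2 : 𝓛 x ≤ (1 / μ') * ‖Λ x‖ ^ 2) :
    𝓛 (x - α • Λ x) ≤ (1 - α * ρ * μ' / 2) * 𝓛 x := by
  have hL' : 0 < L' := by
    by_contra! h
    linarith [div_nonpos_of_nonneg_of_nonpos hρ.le h]
  have hαL' : α * L' ≤ ρ := (le_div_iff₀ hL').1 hαle
  have hdescent := le_add_finner_add_of_lipschitz_gradient hL'.le h𝓛diff hgradL hLip x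
    (x - α • Λ x)
  rw [sub_sub_cancel_left, ← neg_smul, finner_smul_right, norm_smul, Real.norm_eq_abs,
    abs_neg, abs_of_pos hα] at hdescent
  have hΛ : μ' * 𝓛 x ≤ ‖Λ x‖ ^ 2 := by
    rwa [← le_div_iff₀' hμ', div_eq_inv_mul, ← one_div]
  calc 𝓛 (x - α • Λ x) ≤ 𝓛 x - α * finner (gradL x) (Λ x) + L' / 2 * (α * ‖Λ x‖) ^ 2 := by
        linarith
    _ ≤ 𝓛 x - α * ρ / 2 * ‖Λ x‖ ^ 2 := by
        nlinarith [mul_le_mul_of_nonneg_left h1 hα.le,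
          mul_le_mul_of_nonneg_right hαL' (by positivity : 0 ≤ α * ‖Λ x‖ ^ 2)]
    _ ≤ (1 - α * ρ * μ' / 2) * 𝓛 x := by
        nlinarith [mul_le_mul_of_nonneg_left hΛ (by positivity : 0 ≤ α * ρ / 2)]
end
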